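/- For n ≥ 2, the average cyclic Hamming distance of the new code of length n constructed from a cyclic Gray code of length n-1 is at least n - 1, and at most n - 1 + (1/2^{n-1}). -/

import Mathlib

/-! Two cyclically consecutive codewords differ in their prefix bit and exactly one of them is
complemented, so their distance is `1 + m - d(y j, y j')`, where `j, j'` are the positions in the
Gray code they come from. Away from the two mirror points `j, j'` are neighbours in the cyclic
Gray code, giving distance `m`; at the mirror points `j = j'`, giving `m + 1`. Hence the total
distance is `2^(m+1) m + 2` and the average is exactly `m + 1/2^m`. -/

/-- The new counting code of length `m+1` built from a cyclic Gray code
`y` on `m`-bit words: the Gray code followed by its reversal, with every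
codeword at an odd position bitwise complemented, and alternating prefix
bits `0,1,0,1,...` prepended. -/
def newCode (m : ℕ) (y : Fin (2^m) → Fin m → Bool) :
    Fin (2 * 2^m) → Fin (m+1) → Bool := fun k =>
  Fin.cons (decide (k.val % 2 = 1))
    (fun i =>
      let j : Fin (2^m) := ⟨min k.val (2 * 2^m - 1 - k.val), by
        have hk := k.isLt
        have h1 : 1 ≤ 2^m := Nat.one_le_two_pow
        omega⟩
      if k.val % 2 = 0 then y j i else !(y j i))

open Finset

lemma hammingDist_add_hammingDist_not {ι : Type*} [Fintype ι] (f g : ι → Bool) :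
    hammingDist f g + hammingDist f (fun i => !g i) = Fintype.card ι := by
  have hne : ∀ i, (f i ≠ !g i) ↔ ¬(f i ≠ g i) := fun i => by cases f i <;> cases g i <;> simp
  simp only [hammingDist, hne]
  exact card_filter_add_card_filter_not _

lemma hammingDist_not_right {ι : Type*} [Fintype ι] (f g : ι → Bool) :
    hammingDist f (fun i => !g i) = Fintype.card ι - hammingDist f g := by
  have := hammingDist_add_hammingDist_not f g
  omega

lemma hammingDist_cons {n : ℕ} {β : Type*} [DecidableEq β] (a b : β) (f g : Fin n → β) :
    hammingDist (Fin.cons a f : Fin (n + 1) → β) (Fin.cons b g) =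
      (if a = b then 0 else 1) + hammingDist f g := by
  simp only [hammingDist, card_filter, Fin.sum_univ_succ, Fin.cons_zero, Fin.cons_succ]
  by_cases h : a = b <;> simp [h]

lemma Fin.val_add_one_eq_ite {n : ℕ} [NeZero n] (k : Fin n) :
    (k + 1).val = if k.val + 1 = n then 0 else k.val + 1 := by
  rw [Fin.val_add, Fin.val_one', Nat.add_mod_mod]
  split_ifs with h
  · rw [h, Nat.mod_self]
  · exact Nat.mod_eq_of_lt (by omega)

section NewCode

variable {m : ℕ}

/-- The position in the Gray code of the word carried by position `k` of `newCode`. -/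
def foldIndex (k : Fin (2 * 2^m)) : Fin (2^m) :=
  ⟨min k.val (2 * 2^m - 1 - k.val), by
    have hk := k.isLt
    have h1 : 1 ≤ 2^m := Nat.one_le_two_pow
    omega⟩

lemma newCode_apply (y : Fin (2^m) → Fin m → Bool) (k : Fin (2 * 2^m)) :
    newCode m y k = Fin.cons (decide (k.val % 2 = 1))
      (if k.val % 2 = 0 then y (foldIndex k) else fun i => !y (foldIndex k) i) := by
  by_cases h : k.val % 2 = 0 <;> simp only [newCode, h, if_true, if_false] <;> rfl

/-- The positions `k` at which `k` and `k + 1` carry the same word of the Gray code. -/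
def mirrorPoints (m : ℕ) : Finset (Fin (2 * 2^m)) :=
  {⟨2^m - 1, by have := m.one_le_two_pow; omega⟩,
    ⟨2 * 2^m - 1, by have := m.one_le_two_pow; omega⟩}

lemma mem_mirrorPoints {k : Fin (2 * 2^m)} :
    k ∈ mirrorPoints m ↔ k.val = 2^m - 1 ∨ k.val = 2 * 2^m - 1 := by
  simp [mirrorPoints, Fin.ext_iff]

lemma card_mirrorPoints (hm : 1 ≤ m) : #(mirrorPoints m) = 2 := by
  have := Nat.one_lt_two_pow_iff.2 (by omega : m ≠ 0)
  exact card_pair (by rw [Ne, Fin.mk.injEq]; omega)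

lemma foldIndex_add_one_of_mem {k : Fin (2 * 2^m)} (hk : k ∈ mirrorPoints m) :
    foldIndex (k + 1) = foldIndex k := by
  have := m.one_le_two_pow
  rw [mem_mirrorPoints] at hk
  ext
  simp only [foldIndex, Fin.val_add_one_eq_ite]
  split_ifs <;> omega

lemma foldIndex_add_one_of_notMem {k : Fin (2 * 2^m)} (hk : k ∉ mirrorPoints m) :
    foldIndex (k + 1) = foldIndex k + 1 ∨ foldIndex k = foldIndex (k + 1) + 1 := by
  rw [mem_mirrorPoints] at hk
  have hk1 : (k + 1).val = k.val + 1 := by rw [Fin.val_add_one_eq_ite]; split_ifs <;> omega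
  rcases lt_or_ge k.val (2^m) with h | h
  · left
    ext
    rw [Fin.val_add_one_of_lt'] <;> simp only [foldIndex, hk1] <;> omega
  · right
    ext
    rw [Fin.val_add_one_of_lt'] <;> simp only [foldIndex, hk1] <;> omega

lemma hammingDist_newCode_add_one (y : Fin (2^m) → Fin m → Bool) (k : Fin (2 * 2^m)) :
    hammingDist (newCode m y k) (newCode m y (k + 1)) =
      m + 1 - hammingDist (y (foldIndex k)) (y (foldIndex (k + 1))) := by
  have hle : hammingDist (y (foldIndex k)) (y (foldIndex (k + 1))) ≤ m :=
    (hammingDist_le_card_fintype).trans_eq (Fintype.card_fin m)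
  have hpar : (k + 1).val % 2 = 1 - k.val % 2 := by
    rw [Fin.val_add_one_eq_ite]; split_ifs <;> omega
  rw [newCode_apply, newCode_apply, hammingDist_cons]
  rcases Nat.mod_two_eq_zero_or_one k.val with h | h
  · simp only [h, hpar, Nat.sub_zero, zero_ne_one, one_ne_zero, decide_false, decide_true,
      Bool.false_eq_true, ↓reduceIte]
    rw [hammingDist_not_right, Fintype.card_fin]
    omega
  · simp only [h, hpar, Nat.sub_self, zero_ne_one, one_ne_zero, decide_false, decide_true,
      Bool.true_eq_false, ↓reduceIte]
    rw [hammingDist_comm, hammingDist_not_right, Fintype.card_fin, hammingDist_comm]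
    omega

lemma hammingDist_foldIndex_add_one {y : Fin (2^m) → Fin m → Bool}
    (hgray : ∀ j : Fin (2^m), hammingDist (y j) (y (j + 1)) = 1) (k : Fin (2 * 2^m)) :
    hammingDist (y (foldIndex k)) (y (foldIndex (k + 1))) =
      if k ∈ mirrorPoints m then 0 else 1 := by
  split_ifs with hk
  · rw [foldIndex_add_one_of_mem hk, hammingDist_self]
  · rcases foldIndex_add_one_of_notMem hk with h | h
    · rw [h, hgray]
    · rw [h, hammingDist_comm, hgray]

lemma sum_hammingDist_newCode (hm : 1 ≤ m) {y : Fin (2^m) → Fin m → Bool}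
    (hgray : ∀ j : Fin (2^m), hammingDist (y j) (y (j + 1)) = 1) :
    ∑ k : Fin (2 * 2^m), hammingDist (newCode m y k) (newCode m y (k + 1)) = 2 * 2^m * m + 2 := by
  have hdist : ∀ k : Fin (2 * 2^m), hammingDist (newCode m y k) (newCode m y (k + 1)) =
      m + if k ∈ mirrorPoints m then 1 else 0 := fun k => by
    rw [hammingDist_newCode_add_one, hammingDist_foldIndex_add_one hgray]
    split_ifs <;> omega
  simp only [hdist, sum_add_distrib, sum_const, card_univ, Fintype.card_fin, smul_eq_mul,
    sum_ite_mem, univ_inter, card_mirrorPoints hm]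

end NewCode

theorem newCode_average_dist_general (m : ℕ) (hm : 1 ≤ m) (y : Fin (2^m) → Fin m → Bool)
    (hgray : ∀ k : Fin (2^m), hammingDist (y k) (y (k+1)) = 1) :
    (m : ℚ) ≤ (∑ k : Fin (2 * 2^m),
        (hammingDist (newCode m y k) (newCode m y (k+1)) : ℚ)) / (2 * 2^m) ∧
    (∑ k : Fin (2 * 2^m),
        (hammingDist (newCode m y k) (newCode m y (k+1)) : ℚ)) / (2 * 2^m)
      ≤ (m : ℚ) + 1 / 2^m := by
  have haverage : (∑ k : Fin (2 * 2^m),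
      (hammingDist (newCode m y k) (newCode m y (k+1)) : ℚ)) / (2 * 2^m) = m + 1 / 2^m := by
    rw [← Nat.cast_sum, sum_hammingDist_newCode hm hgray]
    push_cast
    field_simp
  rw [haverage]
  exact ⟨le_add_of_nonneg_right (by positivity), le_rfl⟩

/-- For `n = m+1 ≥ 2`, the average cyclic Hamming distance of the
new code is at least `n - 1 = m` and at most `n - 1 + 1/2^(n-1)`. -/
theorem newCode_average_dist (m : ℕ) (hm : 1 ≤ m) (y : Fin (2^m) → Fin m → Bool)
    (hy : Function.Bijective y)
    (hgray : ∀ k : Fin (2^m), hammingDist (y k) (y (k+1)) = 1) :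
    (m : ℚ) ≤ (∑ k : Fin (2 * 2^m),
        (hammingDist (newCode m y k) (newCode m y (k+1)) : ℚ)) / (2 * 2^m) ∧
    (∑ k : Fin (2 * 2^m),
        (hammingDist (newCode m y k) (newCode m y (k+1)) : ℚ)) / (2 * 2^m)
      ≤ (m : ℚ) + 1 / 2^m :=
  newCode_average_dist_general m hm y hgray
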